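/- Let Ω be a ring, R a commutative subring of the center of Ω, and d : R → Ω additive with d(a·b) = d(a)·b + a·d(b). For invertible n×n matrices g₁, …, g_p over R define T(g₁,…,g_p) := trace( g₁·g₂·⋯·g_p · D(g_p⁻¹)·D(g_{p-1}⁻¹)·⋯·D(g₁⁻¹) ) ∈ Ω, where D applies d entrywise. Then for all p ≥ 1 and invertible matrices g₁, …, g_{p+1}: T(g₂,…,g_{p+1}) + Σ_{j=1}^{p} (−1)^j · T(g₁,…,g_j·g_{j+1},…,g_{p+1}) + (−1)^{p+1} · T(g₁,…,g_p) = 0. -/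

import Mathlib

/-- The universal Chern form on `BG`:
`T(g₁,…,g_p) = tr( g₁⋯g_p · D(g_p⁻¹) ⋯ D(g₁⁻¹) )`, for invertible matrices over the
central commutative subring `S` of `Ω`, where `D` applies `d : S → Ω` entrywise and
matrices over `S` are viewed over `Ω` via coercion.  The argument is given as a list. -/
noncomputable def barT {Ω : Type*} [Ring Ω] (S : Subring Ω) (d : S → Ω) {n : ℕ}
    (L : List (Matrix (Fin n) (Fin n) S)ˣ) : Ω :=
  Matrix.trace
    (((L.map Units.val).prod.map (fun x => (x : Ω))) *
      ((L.reverse.map (fun u => (Units.val u⁻¹).map d)).prod))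

/-!
Write `T(L) = tr (P L · Q L)`, with `P L` the product of the matrices of `L` and `Q L` the
reversed product of the `D(g⁻¹)`. By the Leibniz rule `D(h⁻¹g⁻¹) = D(h⁻¹) g⁻¹ + h⁻¹ D(g⁻¹)`,
so the inner face merging `g_{m+1}` and `g_{m+2}` equals `X_m + X_{m+1}`, where `X_m` is
`T(g₁,…,g_{p+1})` with the factor `D(g_{m+1}⁻¹)` replaced by `g_{m+1}⁻¹`. The outer faces are
`X_0` (the entries of `g₁⁻¹` are central, so it can be cycled around the trace to cancel `g₁`)
and `X_p` (where `g_{p+1} g_{p+1}⁻¹` cancels), and the alternating sum telescopes to zero.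
-/

namespace Matrix

variable {l m o R A : Type*} [Fintype m]

theorem map_mul_of_leibniz [Semiring R] [Ring A] (φ : R →+* A) {d : R → A}
    (hd_add : ∀ a b, d (a + b) = d a + d b) (hd_mul : ∀ a b, d (a * b) = d a * φ b + φ a * d b)
    (M : Matrix l m R) (N : Matrix m o R) :
    (M * N).map d = M.map d * N.map φ + M.map φ * N.map d := by
  ext i k
  simp only [map_apply, add_apply, mul_apply, ← Finset.sum_add_distrib, ← hd_mul]
  exact map_sum (AddMonoidHom.mk' d hd_add) _ _

theorem trace_mul_comm_of_commute [Fintype l] [NonUnitalNonAssocSemiring A]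
    (X : Matrix l m A) (Y : Matrix m l A) (h : ∀ i j k l, Commute (X i j) (Y k l)) :
    trace (X * Y) = trace (Y * X) := by
  simp only [trace, diag, mul_apply]
  rw [Finset.sum_comm]
  exact Finset.sum_congr rfl fun i _ => Finset.sum_congr rfl fun j _ => (h _ _ _ _).eq

end Matrix

open Finset in
theorem sum_range_neg_one_pow_mul_eq_zero_of_telescoping {R : Type*} [Ring R] {f x : ℕ → R}
    {p : ℕ} (h_first : f 0 = x 0) (h_last : f (p + 1) = x p)
    (h_mid : ∀ m < p, f (m + 1) = x m + x (m + 1)) :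
    ∑ j ∈ range (p + 2), (-1) ^ j * f j = 0 := by
  have h_tele : ∑ m ∈ range p, (-1) ^ (m + 1) * f (m + 1) =
      -∑ m ∈ range p, ((-1) ^ m * x m - (-1) ^ (m + 1) * x (m + 1)) := by
    rw [← sum_neg_distrib]
    refine sum_congr rfl fun m hm => ?_
    rw [h_mid m (mem_range.mp hm), pow_succ]
    noncomm_ring
  rw [sum_range_succ, sum_range_succ', h_tele, sum_range_sub', h_first, h_last, pow_succ]
  noncomm_ring

section Faces
variable {α : Type*} [Mul α] (u : ℕ → α)

/-- The `j`-th face of `(u 1, …, u (p + 1))`. -/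
def barFace (p j : ℕ) : List α :=
  (List.range p).map fun t =>
    if t + 1 < j then u (t + 1) else if t + 1 = j then u j * u (j + 1) else u (t + 2)

theorem barFace_zero (p : ℕ) : barFace u p 0 = (List.range' 2 p).map u := by
  simp [barFace, List.range'_eq_map_range, List.map_map, Function.comp_def, add_comm]

theorem barFace_last (p : ℕ) : barFace u p (p + 1) = (List.range' 1 p).map u := by
  simp only [barFace, List.range'_eq_map_range, List.map_map, Function.comp_def]
  refine List.map_congr_left fun t ht => ?_
  rw [if_pos (by simpa using ht), add_comm]

theorem barFace_succ (m k : ℕ) :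
    barFace u (m + 1 + k) (m + 1) =
      (List.range' 1 m).map u ++ (u (m + 1) * u (m + 2)) :: (List.range' (m + 3) k).map u := by
  rw [barFace, List.range_eq_range', ← List.range'_append_1, List.range'_1_concat]
  simp only [List.map_append, List.map_cons, List.append_assoc, List.cons_append,
    List.nil_append, zero_add, lt_irrefl, if_false, if_true, List.range'_eq_map_range,
    List.map_map, Function.comp_def]
  congr 1
  · refine List.map_congr_left fun t ht => ?_
    rw [if_pos (by simp at ht; omega), add_comm]
  · congr 1
    refine List.map_congr_left fun t _ => ?_
    rw [if_neg (by omega), if_neg (by omega)]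
    congr 1
    omega

end Faces

namespace barT

open Matrix

variable {Ω : Type*} [Ring Ω] {S : Subring Ω} (d : S → Ω) {n : ℕ}

local notation "C" =>
  (S.subtype.mapMatrix : Matrix (Fin n) (Fin n) S →+* Matrix (Fin n) (Fin n) Ω)

def coeProd (L : List (Matrix (Fin n) (Fin n) S)ˣ) : Matrix (Fin n) (Fin n) Ω :=
  C (L.map Units.val).prod

def diffInvProd (L : List (Matrix (Fin n) (Fin n) S)ˣ) : Matrix (Fin n) (Fin n) Ω :=
  (L.reverse.map fun u => (Units.val u⁻¹).map d).prod

theorem eq_trace (L : List (Matrix (Fin n) (Fin n) S)ˣ) :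
    barT S d L = trace (coeProd L * diffInvProd d L) := rfl

theorem coeProd_append (L₁ L₂ : List (Matrix (Fin n) (Fin n) S)ˣ) :
    coeProd (L₁ ++ L₂) = coeProd L₁ * coeProd L₂ := by
  simp only [coeProd, List.map_append, List.prod_append, map_mul]

theorem coeProd_cons (g : (Matrix (Fin n) (Fin n) S)ˣ) (L : List (Matrix (Fin n) (Fin n) S)ˣ) :
    coeProd (g :: L) = C g * coeProd L := by
  simp only [coeProd, List.map_cons, List.prod_cons, map_mul]

theorem coeProd_nil : coeProd ([] : List (Matrix (Fin n) (Fin n) S)ˣ) = 1 := by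
  simp only [coeProd, List.map_nil, List.prod_nil, map_one]

theorem diffInvProd_append (L₁ L₂ : List (Matrix (Fin n) (Fin n) S)ˣ) :
    diffInvProd d (L₁ ++ L₂) = diffInvProd d L₂ * diffInvProd d L₁ := by
  simp only [diffInvProd, List.reverse_append, List.map_append, List.prod_append]

theorem diffInvProd_cons (g : (Matrix (Fin n) (Fin n) S)ˣ) (L : List (Matrix (Fin n) (Fin n) S)ˣ) :
    diffInvProd d (g :: L) = diffInvProd d L * (Units.val g⁻¹).map d := by
  simp [diffInvProd]

theorem diffInvProd_nil : diffInvProd d ([] : List (Matrix (Fin n) (Fin n) S)ˣ) = 1 := rfl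

def constSlot (L₁ : List (Matrix (Fin n) (Fin n) S)ˣ) (g : (Matrix (Fin n) (Fin n) S)ˣ)
    (L₂ : List (Matrix (Fin n) (Fin n) S)ˣ) : Ω :=
  trace (coeProd (L₁ ++ g :: L₂) * diffInvProd d L₂ * C ↑g⁻¹ * diffInvProd d L₁)

theorem append_mul_cons (hd_add : ∀ a b : S, d (a + b) = d a + d b)
    (hd_mul : ∀ a b : S, d (a * b) = d a * (b : Ω) + (a : Ω) * d b)
    (L₁ L₂ : List (Matrix (Fin n) (Fin n) S)ˣ) (g h : (Matrix (Fin n) (Fin n) S)ˣ) :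
    barT S d (L₁ ++ (g * h) :: L₂) =
      constSlot d L₁ g (h :: L₂) + constSlot d (L₁ ++ [g]) h L₂ := by
  have h_coe : coeProd (L₁ ++ (g * h) :: L₂) = coeProd ((L₁ ++ [g]) ++ h :: L₂) := by
    simp only [coeProd_append, coeProd_cons, coeProd_nil, Units.val_mul, map_mul, mul_assoc,
      mul_one]
  have h_diff : (Units.val (g * h)⁻¹).map d =
      (Units.val h⁻¹).map d * C ↑g⁻¹ + C ↑h⁻¹ * (Units.val g⁻¹).map d := by
    rw [_root_.mul_inv_rev, Units.val_mul]
    exact map_mul_of_leibniz S.subtype hd_add hd_mul _ _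
  rw [eq_trace, h_coe, diffInvProd_append, diffInvProd_cons, h_diff, constSlot, constSlot,
    diffInvProd_cons, diffInvProd_append (L₁ := L₁), diffInvProd_cons, diffInvProd_nil, one_mul]
  simp only [List.append_assoc, List.cons_append, List.nil_append, mul_add, add_mul, trace_add,
    mul_assoc]

theorem constSlot_nil_left (hcen : ∀ (s : S) (x : Ω), (s : Ω) * x = x * (s : Ω))
    (g : (Matrix (Fin n) (Fin n) S)ˣ) (L : List (Matrix (Fin n) (Fin n) S)ˣ) :
    constSlot d [] g L = barT S d L := by
  rw [constSlot, diffInvProd_nil, mul_one,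
    trace_mul_comm_of_commute _ (C ↑g⁻¹) fun _ _ _ _ => (hcen _ _).symm, List.nil_append,
    coeProd_cons, ← mul_assoc, ← mul_assoc, ← map_mul, Units.inv_mul, map_one, one_mul, eq_trace]

theorem constSlot_nil_right (g : (Matrix (Fin n) (Fin n) S)ˣ)
    (L : List (Matrix (Fin n) (Fin n) S)ˣ) :
    constSlot d L g [] = barT S d L := by
  rw [constSlot, diffInvProd_nil, mul_one, coeProd_append, coeProd_cons, coeProd_nil, mul_one,
    mul_assoc (coeProd L), ← map_mul, Units.mul_inv, map_one, mul_one, eq_trace]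

end barT

theorem barT_cocycle_general {Ω : Type*} [Ring Ω] (S : Subring Ω)
    (hcen : ∀ (s : S) (x : Ω), (s : Ω) * x = x * (s : Ω))
    (d : S → Ω)
    (hd_add : ∀ a b : S, d (a + b) = d a + d b)
    (hd_mul : ∀ a b : S, d (a * b) = d a * (b : Ω) + (a : Ω) * d b)
    {n : ℕ} (p : ℕ) (u : ℕ → (Matrix (Fin n) (Fin n) S)ˣ) :
    ∑ j ∈ Finset.range (p + 2),
        (-1 : Ω) ^ j *
          barT S d ((List.range p).map (fun t =>
            if t + 1 < j then u (t + 1)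
            else if t + 1 = j then u j * u (j + 1)
            else u (t + 2))) = 0 := by
  refine sum_range_neg_one_pow_mul_eq_zero_of_telescoping
    (f := fun j => barT S d (barFace u p j))
    (x := fun m => barT.constSlot d ((List.range' 1 m).map u) (u (m + 1))
      ((List.range' (m + 2) (p - m)).map u)) ?_ ?_ ?_
  · simp only [barFace_zero, List.range'_zero, List.map_nil, Nat.sub_zero,
      barT.constSlot_nil_left d hcen]
  · simp only [barFace_last, Nat.sub_self, List.range'_zero, List.map_nil, barT.constSlot_nil_right]
  · intro m hm
    obtain ⟨k, rfl⟩ : ∃ k, p = m + 1 + k := ⟨p - (m + 1), by omega⟩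
    rw [barFace_succ, barT.append_mul_cons d hd_add hd_mul, show m + 1 + k - m = k + 1 by omega,
      Nat.add_sub_cancel_left, List.range'_succ, List.range'_1_concat]
    simp only [List.map_cons, List.map_append, List.map_nil, add_comm 1 m]

/-- The universal Chern forms are closed under the simplicial (bar) differential of
`BG`: for `p ≥ 1` and invertible matrices `g₁,…,g_{p+1}` (given as `u 1, …, u (p+1)`),
`T(g₂,…,g_{p+1}) + Σ_{j=1}^{p} (−1)^j T(g₁,…,g_j·g_{j+1},…,g_{p+1}) + (−1)^{p+1} T(g₁,…,g_p) = 0`. -/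
theorem barT_cocycle {Ω : Type*} [Ring Ω] (S : Subring Ω)
    (hcen : ∀ (s : S) (x : Ω), (s : Ω) * x = x * (s : Ω))
    (d : S → Ω)
    (hd_add : ∀ a b : S, d (a + b) = d a + d b)
    (hd_mul : ∀ a b : S, d (a * b) = d a * (b : Ω) + (a : Ω) * d b)
    {n : ℕ} (p : ℕ) (hp : 1 ≤ p) (u : ℕ → (Matrix (Fin n) (Fin n) S)ˣ) :
    ∑ j ∈ Finset.range (p + 2),
        (-1 : Ω) ^ j *
          barT S d ((List.range p).map (fun t =>
            if t + 1 < j then u (t + 1)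
            else if t + 1 = j then u j * u (j + 1)
            else u (t + 2))) = 0 :=
  barT_cocycle_general S hcen d hd_add hd_mul p u
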